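/- arXiv:1110.2442 — 2 statements merged into one kernel-verified Lean document; each statement's English description precedes it below -/
import Mathlib

section
/- Let Q be a commutative noetherian ring, let f_1, …, f_c ∈ Q (with c ≥ 1) be a regular sequence, and set R = Q/(f_1, …, f_c). Let M and N be finitely generated R-modules such that Tor_j^Q(M, N) = 0 for all sufficiently large j and Tor_j^R(M, N) has finite length for all sufficiently large j. Let P_ev and P_odd be polynomials with rational coefficients of degree at most c − 1 such that length_R Tor_{2j}^R(M, N) = P_ev(j) and length_R Tor_{2j+1}^R(M, N) = P_odd(j) for all sufficiently large j. For each j ≥ 0 set β_j = length_R Tor_j^R(M, N) if this length is finite, and β_j = 0 otherwise. Then the sequence n ↦ (Σ_{j=0}^n (−1)^j β_j)/n^c converges as n → ∞, and its limit equals (a_{c−1} − b_{c−1})/(2^c · c), where a_{c−1} and b_{c−1} are the coefficients of j^{c−1} in P_ev and P_odd respectively. -/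
/-!
Pairing consecutive terms, the alternating partial sum `S n = ∑_{j ≤ n} (-1)^j β_j` satisfies
`S (2m+1) = ∑_{k ≤ m} (β_{2k} - β_{2k+1})`, and the summands eventually equal `D(k)` for
`D = P_ev - P_odd`. By Faulhaber's formula, `∑_{k < m} D(k)` is a polynomial in `m` of degree
at most `c` with `m^c`-coefficient `D_{c-1} / c`. Hence `S (2m)` and `S (2m+1)` eventually agree
with polynomials in `m` of degree at most `c` with that same top coefficient (`β_{2m}` and
`β_{2m+1}` only add degree `< c`), and dividing by `(2m)^c`, resp. `(2m+1)^c`, gives the limit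
`D_{c-1} / (2^c c)` along both parities.
-/

open CategoryTheory

/-- `Tor_n^A(M,N)` for modules over a commutative ring `A`. -/
noncomputable def modTor (A : Type) [CommRing A] (n : ℕ) (M N : ModuleCat.{0} A) :
    ModuleCat.{0} A :=
  ((Tor (ModuleCat.{0} A) n).obj M).obj N

/-- The length of an `A`-module, i.e. the height of `⊤` in its lattice of submodules. -/
noncomputable def modLength (A : Type) [Ring A] (M : Type) [AddCommGroup M] [Module A M] :
    ℕ∞ :=
  Order.height (⊤ : Submodule A M)

open Filter Finset Polynomial Topology

theorem Polynomial.tendsto_eval_div_pow_atTop {𝕜 : Type*} [NormedField 𝕜] [LinearOrder 𝕜]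
    [IsStrictOrderedRing 𝕜] [OrderTopology 𝕜] {P : 𝕜[X]} {d : ℕ} (hP : P.natDegree ≤ d) :
    Tendsto (fun x => P.eval x / x ^ d) atTop (𝓝 (P.coeff d)) := by
  rcases (natDegree_le_iff_degree_le.1 hP).lt_or_eq with hPd | hPd
  · rw [coeff_eq_zero_of_degree_lt hPd]
    simpa using div_tendsto_atTop_zero_of_degree_lt P (X ^ d) (by rwa [degree_X_pow])
  · rw [← natDegree_eq_of_degree_eq_some hPd, coeff_natDegree]
    simpa [natDegree_eq_of_degree_eq_some hPd] using
      div_tendsto_atTop_leadingCoeff_div_of_degree_eq P (X ^ d) (by rw [hPd, degree_X_pow])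

theorem tendsto_of_tendsto_two_mul_of_tendsto_two_mul_add_one {α : Type*}
    {u : ℕ → α} {l : Filter α}
    (h₀ : Tendsto (fun m => u (2 * m)) atTop l) (h₁ : Tendsto (fun m => u (2 * m + 1)) atTop l) :
    Tendsto u atTop l := by
  intro s hs
  obtain ⟨N₀, hN₀⟩ := eventually_atTop.1 (h₀ hs)
  obtain ⟨N₁, hN₁⟩ := eventually_atTop.1 (h₁ hs)
  refine eventually_atTop.2 ⟨2 * N₀ + 2 * N₁ + 1, fun n hn => ?_⟩
  obtain ⟨m, rfl | rfl⟩ := Nat.even_or_odd' n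
  · exact hN₀ m (by omega)
  · exact hN₁ m (by omega)

theorem sum_range_two_mul_neg_one_pow_mul {R : Type*} [Ring R] (β : ℕ → R) (m : ℕ) :
    ∑ j ∈ range (2 * m), (-1) ^ j * β j = ∑ k ∈ range m, (β (2 * k) - β (2 * k + 1)) := by
  induction m with
  | zero => simp
  | succ m ih =>
    rw [mul_add_one, sum_range_succ, sum_range_succ, sum_range_succ, ih, pow_succ, pow_mul]
    simp only [sum_sub_distrib, even_two, Even.neg_pow, one_pow, one_mul, mul_neg, mul_one,
      neg_mul]
    abel

theorem exists_forall_sum_range_eq_add_of_eventuallyEq {M : Type*} [AddCommGroup M]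
    {a b : ℕ → M} (h : ∀ᶠ k in atTop, a k = b k) :
    ∃ C : M, ∀ᶠ n in atTop, ∑ k ∈ range n, a k = ∑ k ∈ range n, b k + C := by
  obtain ⟨K, hK⟩ := eventually_atTop.1 h
  refine ⟨∑ k ∈ range K, (a k - b k), eventually_atTop.2 ⟨K, fun n hn => ?_⟩⟩
  rw [← sub_eq_iff_eq_add', ← sum_sub_distrib, ← sum_range_add_sum_Ico _ hn,
    sum_eq_zero (fun k hk => sub_eq_zero.2 (hK k (mem_Ico.1 hk).1)), add_zero]

namespace Polynomial

/-- Faulhaber: `(i + 1) ∑_{k < n} k^i = B_{i+1}(n) - B_{i+1}(0)` for the Bernoulli polynomial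
`B_{i+1}`. -/
noncomputable def partialSum (D : ℚ[X]) : ℚ[X] :=
  ∑ i ∈ range (D.natDegree + 1),
    C (D.coeff i / (i + 1)) * (bernoulli (i + 1) - C (_root_.bernoulli (i + 1)))

theorem eval_partialSum (D : ℚ[X]) (n : ℕ) :
    D.partialSum.eval (n : ℚ) = ∑ k ∈ range n, D.eval (k : ℚ) := by
  have hpow (i : ℕ) : (bernoulli (i + 1)).eval (n : ℚ) - _root_.bernoulli (i + 1) =
      (i + 1) * ∑ k ∈ range n, (k : ℚ) ^ i := by
    exact_mod_cast (sum_range_pow_eq_bernoulli_sub n i).symm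
  simp only [partialSum, eval_finsetSum, eval_mul, eval_C, eval_sub, hpow,
    eval_eq_sum_range (p := D), mul_sum]
  rw [sum_comm]
  refine sum_congr rfl fun i _ => sum_congr rfl fun k _ => ?_
  field_simp

theorem coeff_partialSum (D : ℚ[X]) {j : ℕ} (hj : j ≠ 0) :
    D.partialSum.coeff j =
      ∑ i ∈ range (D.natDegree + 1), D.coeff i / (i + 1) * (bernoulli (i + 1)).coeff j := by
  simp [partialSum, finsetSum_coeff, coeff_C, hj]

theorem natDegree_partialSum_le {D : ℚ[X]} {m : ℕ} (hm : D.natDegree ≤ m) :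
    D.partialSum.natDegree ≤ m + 1 := by
  refine natDegree_le_iff_coeff_eq_zero.2 fun j hj => ?_
  rw [coeff_partialSum D (by omega)]
  refine sum_eq_zero fun i hi => ?_
  rw [coeff_bernoulli, if_neg (by rw [mem_range] at hi; omega), mul_zero]

theorem coeff_partialSum_succ {D : ℚ[X]} {m : ℕ} (hm : D.natDegree ≤ m) :
    D.partialSum.coeff (m + 1) = D.coeff m / (m + 1) := by
  rw [coeff_partialSum D m.succ_ne_zero, sum_eq_single m]
  · simp [coeff_bernoulli]
  · intro i hi him
    rw [coeff_bernoulli, if_neg (by rw [mem_range] at hi; omega), mul_zero]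
  · intro hm'
    rw [coeff_eq_zero_of_natDegree_lt (by rw [mem_range] at hm'; omega)]
    simp

end Polynomial

theorem tendsto_natCast_div_two_mul_add (r : ℚ) :
    Tendsto (fun m : ℕ => (m : ℚ) / (2 * m + r)) atTop (𝓝 (1 / 2)) := by
  have h := (tendsto_natCast_div_add_atTop (r / 2)).const_mul (1 / 2 : ℚ)
  rw [mul_one] at h
  refine h.congr fun m => ?_
  field_simp

theorem tendsto_div_two_mul_add_pow_of_eventually_eq_eval {f : ℕ → ℚ} {H : ℚ[X]} {c : ℕ}
    (hH : H.natDegree ≤ c) (hf : ∀ᶠ m in atTop, f m = H.eval (m : ℚ)) (r : ℕ) :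
    Tendsto (fun m : ℕ => f m / ((2 * m + r : ℕ) : ℚ) ^ c) atTop (𝓝 (H.coeff c / 2 ^ c)) := by
  have hlim := ((tendsto_eval_div_pow_atTop hH).comp tendsto_natCast_atTop_atTop).mul
    ((tendsto_natCast_div_two_mul_add r).pow c)
  rw [div_pow, one_pow, ← div_eq_mul_one_div] at hlim
  refine hlim.congr' ?_
  filter_upwards [hf, eventually_ne_atTop 0] with m hfm hm
  rw [hfm, Function.comp_apply, div_pow, div_mul_div_cancel₀ (by positivity)]
  push_cast
  rfl

theorem exists_eventually_sum_range_neg_one_pow_mul_eq_eval {β : ℕ → ℚ} {P Q : ℚ[X]} {d : ℕ}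
    (hP : P.natDegree ≤ d) (hQ : Q.natDegree ≤ d)
    (hβ : ∀ᶠ m in atTop, β (2 * m) = P.eval (m : ℚ) ∧ β (2 * m + 1) = Q.eval (m : ℚ)) :
    ∃ A : ℚ[X], A.natDegree ≤ d + 1 ∧ A.coeff (d + 1) = (P - Q).coeff d / (d + 1) ∧
      ∀ᶠ m in atTop,
        ∑ j ∈ range (2 * m + 1), (-1 : ℚ) ^ j * β j = (A + P).eval (m : ℚ) ∧
        ∑ j ∈ range (2 * m + 1 + 1), (-1 : ℚ) ^ j * β j = (A + (P - Q)).eval (m : ℚ) := by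
  have hD : (P - Q).natDegree ≤ d := (natDegree_sub_le P Q).trans (max_le hP hQ)
  obtain ⟨C₀, hC₀⟩ := exists_forall_sum_range_eq_add_of_eventuallyEq
    (a := fun k => β (2 * k) - β (2 * k + 1)) (b := fun k => (P - Q).eval (k : ℚ))
    (hβ.mono fun m hm => by simp only [eval_sub, hm.1, hm.2])
  refine ⟨(P - Q).partialSum + C C₀,
    (natDegree_add_le _ _).trans (max_le (natDegree_partialSum_le hD) (by simp)),
    by simp [coeff_partialSum_succ hD], ?_⟩
  filter_upwards [hC₀, hβ] with m hm hβm
  constructor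
  · rw [sum_range_succ, sum_range_two_mul_neg_one_pow_mul, hm]
    simp [eval_partialSum, hβm.1]
  · rw [show 2 * m + 1 + 1 = 2 * (m + 1) by ring, sum_range_two_mul_neg_one_pow_mul,
      sum_range_succ, hm]
    simp [eval_partialSum, hβm.1, hβm.2]

theorem tendsto_sum_range_neg_one_pow_mul_div_pow {β : ℕ → ℚ} {P Q : ℚ[X]} {c : ℕ}
    (hP : P.natDegree < c) (hQ : Q.natDegree < c)
    (hβ : ∀ᶠ m in atTop, β (2 * m) = P.eval (m : ℚ) ∧ β (2 * m + 1) = Q.eval (m : ℚ)) :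
    Tendsto (fun n : ℕ => (∑ j ∈ range (n + 1), (-1 : ℚ) ^ j * β j) / (n : ℚ) ^ c) atTop
      (𝓝 ((P.coeff (c - 1) - Q.coeff (c - 1)) / (2 ^ c * c))) := by
  obtain ⟨d, rfl⟩ : ∃ d, c = d + 1 := ⟨c - 1, by omega⟩
  rw [Nat.add_sub_cancel]
  have hP' : P.natDegree ≤ d := Nat.lt_succ_iff.1 hP
  have hD : (P - Q).natDegree ≤ d := (natDegree_sub_le P Q).trans (max_le hP' (by omega))
  obtain ⟨A, hA, hAc, hS⟩ := exists_eventually_sum_range_neg_one_pow_mul_eq_eval hP' (by omega) hβ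
  have hlim₀ := tendsto_div_two_mul_add_pow_of_eventually_eq_eval
    ((natDegree_add_le _ _).trans (max_le hA (by omega))) (hS.mono fun _ h => h.1) 0
  have hlim₁ := tendsto_div_two_mul_add_pow_of_eventually_eq_eval
    ((natDegree_add_le _ _).trans (max_le hA (by omega))) (hS.mono fun _ h => h.2) 1
  rw [coeff_add, hAc, coeff_eq_zero_of_natDegree_lt hP, add_zero] at hlim₀
  rw [coeff_add, hAc, coeff_eq_zero_of_natDegree_lt (hD.trans_lt d.lt_succ_self),
    add_zero] at hlim₁
  have hL : (P - Q).coeff d / (d + 1) / 2 ^ (d + 1) =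
      (P.coeff d - Q.coeff d) / (2 ^ (d + 1) * ((d + 1 : ℕ) : ℚ)) := by
    rw [coeff_sub]
    push_cast
    field_simp
  rw [hL] at hlim₀ hlim₁
  exact tendsto_of_tendsto_two_mul_of_tendsto_two_mul_add_one hlim₀ hlim₁

theorem statement1_general (Q : Type) [CommRing Q]
    (c : ℕ) (hc : 1 ≤ c) (f : Fin c → Q)
    (M N : ModuleCat.{0} (Q ⧸ Ideal.span (Set.range f)))
    (htorR : ∃ J : ℕ, ∀ j ≥ J, IsFiniteLength (Q ⧸ Ideal.span (Set.range f))
      (modTor (Q ⧸ Ideal.span (Set.range f)) j M N))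
    (Pev Podd : Polynomial ℚ)
    (hPev : Pev.degree ≤ (c - 1 : ℕ)) (hPodd : Podd.degree ≤ (c - 1 : ℕ))
    (J : ℕ)
    (hvals : ∀ j ≥ J,
      ((modLength (Q ⧸ Ideal.span (Set.range f))
          (modTor (Q ⧸ Ideal.span (Set.range f)) (2 * j) M N)).toNat : ℚ)
        = Pev.eval (j : ℚ) ∧
      ((modLength (Q ⧸ Ideal.span (Set.range f))
          (modTor (Q ⧸ Ideal.span (Set.range f)) (2 * j + 1) M N)).toNat : ℚ)
        = Podd.eval (j : ℚ))
    (β : ℕ → ℚ)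
    (hβfin : ∀ j, IsFiniteLength (Q ⧸ Ideal.span (Set.range f))
        (modTor (Q ⧸ Ideal.span (Set.range f)) j M N) →
      β j = ((modLength (Q ⧸ Ideal.span (Set.range f))
        (modTor (Q ⧸ Ideal.span (Set.range f)) j M N)).toNat : ℚ)) :
    Filter.Tendsto
      (fun n : ℕ => (∑ j ∈ Finset.range (n + 1), (-1 : ℚ) ^ j * β j) / (n : ℚ) ^ c)
      Filter.atTop
      (nhds ((Pev.coeff (c - 1) - Podd.coeff (c - 1)) / (2 ^ c * c))) := by
  obtain ⟨J', hJ'⟩ := htorR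
  have hdeg {P : Polynomial ℚ} (hP : P.degree ≤ (c - 1 : ℕ)) : P.natDegree < c := by
    have := natDegree_le_iff_degree_le.2 hP
    omega
  refine tendsto_sum_range_neg_one_pow_mul_div_pow (hdeg hPev) (hdeg hPodd) ?_
  filter_upwards [eventually_ge_atTop (max J J')] with m hm
  exact ⟨(hβfin _ (hJ' (2 * m) (by omega))).trans (hvals m (by omega)).1,
    (hβfin _ (hJ' (2 * m + 1) (by omega))).trans (hvals m (by omega)).2⟩

/-- Remark 2.3: with `P_ev`, `P_odd` the eventual even/odd Tor-length polynomials
(of degree at most `c-1`), and `β_j` the length of `Tor^R_j(M,N)` when finite and `0`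
otherwise, the sequence `(Σ_{j=0}^n (-1)^j β_j)/n^c` converges to
`(a_{c-1} - b_{c-1})/(2^c · c)`, where `a_{c-1}`, `b_{c-1}` are the coefficients of
`j^{c-1}` in `P_ev`, `P_odd`. -/
theorem statement1 (Q : Type) [CommRing Q] [IsNoetherianRing Q]
    (c : ℕ) (hc : 1 ≤ c) (f : Fin c → Q)
    (hreg : RingTheory.Sequence.IsRegular Q (List.ofFn f))
    (M N : ModuleCat.{0} (Q ⧸ Ideal.span (Set.range f)))
    (hM : Module.Finite (Q ⧸ Ideal.span (Set.range f)) M)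
    (hN : Module.Finite (Q ⧸ Ideal.span (Set.range f)) N)
    (htorQ : ∃ J : ℕ, ∀ j ≥ J, Subsingleton
      (modTor Q j
        ((ModuleCat.restrictScalars (Ideal.Quotient.mk (Ideal.span (Set.range f)))).obj M)
        ((ModuleCat.restrictScalars (Ideal.Quotient.mk (Ideal.span (Set.range f)))).obj N)))
    (htorR : ∃ J : ℕ, ∀ j ≥ J, IsFiniteLength (Q ⧸ Ideal.span (Set.range f))
      (modTor (Q ⧸ Ideal.span (Set.range f)) j M N))
    (Pev Podd : Polynomial ℚ)
    (hPev : Pev.degree ≤ (c - 1 : ℕ)) (hPodd : Podd.degree ≤ (c - 1 : ℕ))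
    (J : ℕ)
    (hvals : ∀ j ≥ J,
      ((modLength (Q ⧸ Ideal.span (Set.range f))
          (modTor (Q ⧸ Ideal.span (Set.range f)) (2 * j) M N)).toNat : ℚ)
        = Pev.eval (j : ℚ) ∧
      ((modLength (Q ⧸ Ideal.span (Set.range f))
          (modTor (Q ⧸ Ideal.span (Set.range f)) (2 * j + 1) M N)).toNat : ℚ)
        = Podd.eval (j : ℚ))
    (β : ℕ → ℚ)
    (hβfin : ∀ j, IsFiniteLength (Q ⧸ Ideal.span (Set.range f))
        (modTor (Q ⧸ Ideal.span (Set.range f)) j M N) →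
      β j = ((modLength (Q ⧸ Ideal.span (Set.range f))
        (modTor (Q ⧸ Ideal.span (Set.range f)) j M N)).toNat : ℚ))
    (hβinf : ∀ j, ¬ IsFiniteLength (Q ⧸ Ideal.span (Set.range f))
        (modTor (Q ⧸ Ideal.span (Set.range f)) j M N) →
      β j = 0) :
    Filter.Tendsto
      (fun n : ℕ => (∑ j ∈ Finset.range (n + 1), (-1 : ℚ) ^ j * β j) / (n : ℚ) ^ c)
      Filter.atTop
      (nhds ((Pev.coeff (c - 1) - Podd.coeff (c - 1)) / (2 ^ c * c))) :=
  statement1_general Q c hc f M N htorR Pev Podd hPev hPodd J hvals β hβfin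
end

section
/- Let G be a commutative ring graded by the integers with G_i = 0 for all i > 0, and let H be a ℤ-graded G-module such that H_i is an artinian G_0-module for all sufficiently large i. Let X : H → H be a G-linear map that is homogeneous of some negative degree w < 0, i.e., X(H_i) ⊆ H_{i+w} for all i. Regard H as a module over the polynomial ring G[T] by letting T act as X. For an integer r, let H_{<r} denote the G[T]-submodule generated by ⊕_{i<r} H_i (since G is concentrated in nonpositive degrees and w < 0, this equals ⊕_{i<r} H_i itself). Assume that the kernel of X is almost artinian as a graded G-module, i.e., there exists r such that ker(X)/(ker(X) ∩ ⊕_{i<r} H_i) is an artinian G-module. Then H is almost artinian as a G[T]-module: there exists an integer r such that the quotient H/H_{<r} is an artinian G[T]-module. -/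
set_option maxHeartbeats 1000000 in
/-- Lemma A.2 (after Gulliksen): let `G` be a commutative ring graded by `ℤ` with
`G_i = 0` for `i > 0`, and `H` a `ℤ`-graded `G`-module with `H_i` artinian over `G_0`
for all `i ≫ 0`.  Let `X : H → H` be a `G`-linear map, homogeneous of negative degree
`w < 0`, and regard `H` as a `G[T]`-module with `T` acting as `X` (so the `G[T]`-submodules
of `H` are exactly the `X`-stable `G`-submodules).  If `ker X` is almost artinian as a
graded `G`-module, then `H` is almost artinian as a `G[T]`-module.

Artinianness of the various subquotients is expressed via the stabilization of the
corresponding descending chains of (stable) subgroups/submodules lying above the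
relevant tail. -/
theorem statement10 (G : Type) [CommRing G] (H : Type) [AddCommGroup H] [Module G H]
    -- `G` is a `ℤ`-graded commutative ring concentrated in nonpositive degrees:
    (𝒢 : ℤ → AddSubgroup G) (hGdec : DirectSum.Decomposition 𝒢)
    (hGone : (1 : G) ∈ 𝒢 0)
    (hGmul : ∀ (i j : ℤ), ∀ a ∈ 𝒢 i, ∀ b ∈ 𝒢 j, a * b ∈ 𝒢 (i + j))
    (hGneg : ∀ i : ℤ, 0 < i → 𝒢 i = ⊥)
    -- `H` is a `ℤ`-graded `G`-module:
    (ℋ : ℤ → AddSubgroup H) (hHdec : DirectSum.Decomposition ℋ)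
    (hHsmul : ∀ (i j : ℤ), ∀ g ∈ 𝒢 i, ∀ x ∈ ℋ j, g • x ∈ ℋ (i + j))
    -- `H_i` is an artinian `G_0`-module for all sufficiently large `i`:
    (i₀ : ℤ)
    (hart : ∀ i ≥ i₀, ∀ C : ℕ → AddSubgroup H,
      (∀ n, C n ≤ ℋ i) →
      (∀ n, ∀ g ∈ 𝒢 0, ∀ x ∈ C n, g • x ∈ C n) →
      (∀ n, C (n + 1) ≤ C n) →
      ∃ n₀, ∀ m ≥ n₀, C m = C n₀)
    -- `X` is `G`-linear and homogeneous of negative degree `w`: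
    (X : H →ₗ[G] H) (w : ℤ) (hw : w < 0)
    (hXhom : ∀ (i : ℤ), ∀ x ∈ ℋ i, X x ∈ ℋ (i + w))
    -- `ker X` is almost artinian as a graded `G`-module: for some `r`, the descending
    -- chains of `G`-submodules of `ker X` containing `ker X ∩ (⊕_{i<r} H_i)` stabilize:
    (hker : ∃ r : ℤ, ∀ C : ℕ → Submodule G H,
      (∀ n, C n ≤ LinearMap.ker X) →
      (∀ n, ∀ x ∈ (⨆ i < r, ℋ i : AddSubgroup H), x ∈ LinearMap.ker X → x ∈ C n) →
      (∀ n, C (n + 1) ≤ C n) →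
      ∃ n₀, ∀ m ≥ n₀, C m = C n₀) :
    -- then `H` is almost artinian as a `G[T]`-module: for some `r`, the descending
    -- chains of `X`-stable `G`-submodules of `H` containing `⊕_{i<r} H_i` stabilize:
    ∃ r : ℤ, ∀ C : ℕ → Submodule G H,
      (∀ n, ∀ x ∈ (⨆ i < r, ℋ i : AddSubgroup H), x ∈ C n) →
      (∀ n, ∀ x ∈ C n, X x ∈ C n) →
      (∀ n, C (n + 1) ≤ C n) →
      ∃ n₀, ∀ m ≥ n₀, C m = C n₀ := by
  classical
  haveI := hGdec; haveI := hHdec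
  obtain ⟨r₀, hker⟩ := hker
  set r : ℤ := max r₀ i₀ with hrdef
  have hrr₀ : r₀ ≤ r := le_max_left _ _
  have hri₀ : i₀ ≤ r := le_max_right _ _
  -- components
  set cp : ℤ → H → H := fun d x => ((DirectSum.decompose ℋ x) d : H) with hcp
  have cp_mem : ∀ d x, cp d x ∈ ℋ d := fun d x => SetLike.coe_mem _
  have cp_same : ∀ d x, x ∈ ℋ d → cp d x = x := fun d x h => DirectSum.decompose_of_mem_same ℋ h
  have cp_ne : ∀ {d j} (x : H), x ∈ ℋ j → j ≠ d → cp d x = 0 :=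
    fun {d j} x h hne => DirectSum.decompose_of_mem_ne ℋ h hne
  have cp_sub : ∀ d x y, cp d (x - y) = cp d x - cp d y := by
    intro d x y; simp only [hcp, DirectSum.decompose_sub]; rfl
  have cp_sum : ∀ d (s : Finset ℤ) (f : ℤ → H), cp d (∑ j ∈ s, f j) = ∑ j ∈ s, cp d (f j) := by
    intro d s f
    induction s using Finset.cons_induction with
    | empty => simp [hcp]
    | cons a s ha ih =>
      rw [Finset.sum_cons, Finset.sum_cons, ← ih]
      simp only [hcp, DirectSum.decompose_add]; rfl
  have cp_zero : ∀ d, cp d (0 : H) = 0 := by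
    intro d; simpa using cp_sub d 0 0
  have eq_zero_of_cp : ∀ x : H, (∀ d, cp d x = 0) → x = 0 := by
    intro x h
    conv_lhs => rw [← DirectSum.sum_support_decompose ℋ x]
    exact Finset.sum_eq_zero fun i _ => h i
  have cp_decomp : ∀ x : H, x = ∑ j ∈ (DirectSum.decompose ℋ x).support, cp j x := by
    intro x; exact (DirectSum.sum_support_decompose ℋ x).symm
  have cp_not_support : ∀ (x : H) d, d ∉ (DirectSum.decompose ℋ x).support → cp d x = 0 := by
    intro x d hd
    simp only [DFinsupp.mem_support_iff, not_not] at hd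
    simp [hcp, hd]
  -- the "low" submodules
  have low_smul : ∀ (c : ℤ) (g : G) (x : H), (∀ d, c ≤ d → cp d x = 0) →
      ∀ d, c ≤ d → cp d (g • x) = 0 := by
    intro c g x hx d hd
    have hg : g • x = ∑ i ∈ (DirectSum.decompose 𝒢 g).support,
        ((DirectSum.decompose 𝒢 g) i : G) • x := by
      conv_lhs => rw [← DirectSum.sum_support_decompose 𝒢 g]
      rw [Finset.sum_smul]
    rw [hg, cp_sum]
    refine Finset.sum_eq_zero fun i _ => ?_
    set gi : G := ((DirectSum.decompose 𝒢 g) i : G) with hgidef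
    have hgi : gi ∈ 𝒢 i := SetLike.coe_mem _
    by_cases hi0 : 0 < i
    · have : gi = 0 := by
        rw [hGneg i hi0] at hgi; simpa using hgi
      rw [this, zero_smul, cp_zero]
    · have hxsum : gi • x = ∑ j ∈ (DirectSum.decompose ℋ x).support, gi • cp j x := by
        conv_lhs => rw [cp_decomp x]
        rw [Finset.smul_sum]
      rw [hxsum, cp_sum]
      refine Finset.sum_eq_zero fun j _ => ?_
      by_cases hjc : c ≤ j
      · rw [hx j hjc, smul_zero, cp_zero]
      · exact cp_ne _ (hHsmul i j gi hgi _ (cp_mem j x)) (by omega)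
  set low : ℤ → Submodule G H := fun c =>
    { carrier := {x | ∀ d, c ≤ d → cp d x = 0}
      add_mem' := by
        intro a b ha hb d hd
        have : cp d (a + b) = cp d a + cp d b := by
          simp only [hcp, DirectSum.decompose_add]; rfl
        rw [this, ha d hd, hb d hd, add_zero]
      zero_mem' := fun d _ => cp_zero d
      smul_mem' := fun g x hx => low_smul _ g x hx } with hlow
  have mem_low : ∀ (c : ℤ) (x : H), x ∈ low c ↔ ∀ d, c ≤ d → cp d x = 0 := fun c x => Iff.rfl
  have low_mono : ∀ {c c' : ℤ}, c ≤ c' → low c ≤ low c' := by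
    intro c c' hcc x hx d hd; exact hx d (hcc.trans hd)
  have hom_le_low : ∀ {j c : ℤ}, j < c → ∀ x ∈ ℋ j, x ∈ low c := by
    intro j c hjc x hx d hd; exact cp_ne x hx (by omega)
  have sup_le_low : ∀ (c : ℤ) (x : H), x ∈ (⨆ i < c, ℋ i : AddSubgroup H) → x ∈ low c := by
    intro c
    have h : (⨆ i < c, ℋ i : AddSubgroup H) ≤ (low c).toAddSubgroup := by
      refine iSup_le fun i => iSup_le fun hic => ?_
      intro x hx
      exact hom_le_low hic x hx
    intro x hx
    exact h hx
  have low_le_sup : ∀ (c : ℤ) (x : H), x ∈ low c → x ∈ (⨆ i < c, ℋ i : AddSubgroup H) := by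
    intro c x hx
    rw [cp_decomp x]
    refine AddSubgroup.sum_mem _ fun j hj => ?_
    have hjc : j < c := by
      by_contra hjc
      have h0 : cp j x = 0 := hx j (by omega)
      rw [DFinsupp.mem_support_iff] at hj
      exact hj (by exact_mod_cast Subtype.ext h0)
    exact le_iSup₂ (f := fun i (_ : i < c) => ℋ i) j hjc (cp_mem j x)
  -- X and powers
  have X_low : ∀ (c : ℤ) (x : H), x ∈ low c → X x ∈ low (c + w) := by
    intro c x hx d hd
    have h1 : X x = ∑ j ∈ (DirectSum.decompose ℋ x).support, X (cp j x) := by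
      conv_lhs => rw [cp_decomp x]
      rw [map_sum]
    rw [h1, cp_sum]
    refine Finset.sum_eq_zero fun j _ => ?_
    by_cases hjc : c ≤ j
    · rw [hx j hjc, map_zero, cp_zero]
    · exact cp_ne _ (hXhom j _ (cp_mem j x)) (by omega)
  have X_low_r : ∀ x : H, x ∈ low r → X x ∈ low r := by
    intro x hx; exact low_mono (by omega) (X_low r x hx)
  have pow_succ_apply : ∀ (k : ℕ) (x : H), (X ^ (k + 1)) x = (X ^ k) (X x) := by
    intro k x; rw [pow_succ, Module.End.mul_apply]
  have pow_succ_apply' : ∀ (k : ℕ) (x : H), (X ^ (k + 1)) x = X ((X ^ k) x) := by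
    intro k x; rw [pow_succ', Module.End.mul_apply]
  have pow_zero_apply : ∀ x : H, (X ^ 0) x = x := fun x => rfl
  have pow_mem : ∀ (k : ℕ) (j : ℤ) (y : H), y ∈ ℋ j → (X ^ k) y ∈ ℋ (j + k * w) := by
    intro k
    induction k with
    | zero => intro j y hy; simpa using hy
    | succ k ih =>
      intro j y hy
      rw [pow_succ_apply']
      have h2 : (j + ((k : ℤ) + 1) * w) = (j + k * w) + w := by ring
      push_cast
      rw [h2]
      exact hXhom _ _ (ih j y hy)
  have pow_low_r : ∀ (m : ℕ) (z : H), z ∈ low r → (X ^ m) z ∈ low r := by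
    intro m
    induction m with
    | zero => intro z hz; exact hz
    | succ m ih => intro z hz; rw [pow_succ_apply']; exact X_low_r _ (ih z hz)
  have pow_mono_low : ∀ {k k' : ℕ}, k ≤ k' → ∀ z : H, (X ^ k) z ∈ low r → (X ^ k') z ∈ low r := by
    intro k k' hkk z hz
    obtain ⟨m, rfl⟩ : ∃ m, k' = m + k := ⟨k' - k, by omega⟩
    rw [pow_add, Module.End.mul_apply]
    exact pow_low_r m _ hz
  have locNilp : ∀ x : H, ∃ k : ℕ, (X ^ k) x ∈ low r := by
    have homNilp : ∀ (j : ℤ) (y : H), y ∈ ℋ j → (X ^ (j - r + 1).toNat) y ∈ low r := by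
      intro j y hy
      by_cases hj : j < r
      · have h0 : (j - r + 1).toNat = 0 := by omega
        rw [h0, pow_zero_apply]
        exact hom_le_low hj y hy
      · have h := pow_mem (j - r + 1).toNat j y hy
        have hk : (j - r + 1 : ℤ) ≤ ((j - r + 1).toNat : ℤ) := Int.self_le_toNat _
        have hknn : (0 : ℤ) ≤ ((j - r + 1).toNat : ℤ) := Int.ofNat_nonneg _
        have hmul : ((j - r + 1).toNat : ℤ) * w ≤ ((j - r + 1).toNat : ℤ) * (-1) :=
          mul_le_mul_of_nonneg_left (by omega) hknn
        exact hom_le_low (by omega) _ h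
    intro x
    obtain ⟨K, hK⟩ : ∃ K, K = ((DirectSum.decompose ℋ x).support).sup (fun j => (j - r + 1).toNat) :=
      ⟨_, rfl⟩
    refine ⟨K, ?_⟩
    have h1 : (X ^ K) x = ∑ j ∈ (DirectSum.decompose ℋ x).support, (X ^ K) (cp j x) := by
      conv_lhs => rw [cp_decomp x]
      rw [map_sum]
    rw [h1]
    subst hK
    exact Submodule.sum_mem _ fun j hj =>
      pow_mono_low (Finset.le_sup hj) _ (homNilp j _ (cp_mem j x))
  -- relative socle S
  set S : Submodule G H := Submodule.comap X (low r) with hS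
  have mem_S : ∀ x : H, x ∈ S ↔ X x ∈ low r := fun x => Iff.rfl
  have low_le_S : ∀ {c : ℤ}, c ≤ r - w → low c ≤ S := by
    intro c hc x hx
    exact low_mono (by omega) (X_low c x hx)
  have S_split : ∀ x ∈ S, ∃ f ∈ low (r - w), ∃ b ∈ LinearMap.ker X, x = f + b := by
    intro x hx
    set sF := (DirectSum.decompose ℋ x).support.filter (fun j => r - w ≤ j) with hsF
    set b := ∑ j ∈ sF, cp j x with hb
    have hfb : x - b ∈ low (r - w) := by
      intro d hd
      rw [cp_sub, hb, cp_sum]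
      by_cases hdm : d ∈ sF
      · rw [Finset.sum_eq_single d]
        · rw [cp_same d (cp d x) (cp_mem d x), sub_self]
        · intro j _ hne; exact cp_ne _ (cp_mem j x) hne
        · intro h; exact absurd hdm h
      · have h1 : cp d x = 0 := by
          apply cp_not_support
          intro hds
          exact hdm (Finset.mem_filter.mpr ⟨hds, hd⟩)
        rw [h1, zero_sub, neg_eq_zero]
        refine Finset.sum_eq_zero fun j hj => ?_
        exact cp_ne _ (cp_mem j x) (fun h => hdm (h ▸ hj))
    have hXb : X b = 0 := by
      apply eq_zero_of_cp
      intro d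
      by_cases hdr : d < r
      · have h2 : X b = ∑ j ∈ sF, X (cp j x) := by rw [hb, map_sum]
        rw [h2, cp_sum]
        refine Finset.sum_eq_zero fun j hj => ?_
        have hjr : r - w ≤ j := (Finset.mem_filter.mp hj).2
        exact cp_ne _ (hXhom j _ (cp_mem j x)) (by omega)
      · have hxb : X b = X x - X (x - b) := by rw [map_sub, sub_sub_cancel]
        rw [hxb, cp_sub]
        have h1 : cp d (X x) = 0 := hx d (by omega)
        have h2 : cp d (X (x - b)) = 0 := by
          have h3 := X_low (r - w) _ hfb
          rw [show r - w + w = r by ring] at h3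
          exact h3 d (by omega)
        rw [h1, h2, sub_zero]
    exact ⟨x - b, hfb, b, LinearMap.mem_ker.mpr hXb, (sub_add_cancel x b).symm⟩
  -- master stabilization lemma
  have STAB : ∀ (u s : ℕ), (s : ℤ) + u = -w → ∀ P : ℕ → Submodule G H,
      (∀ n, low (r + s) ≤ P n) → (∀ n, P n ≤ S) → (∀ n, P (n + 1) ≤ P n) →
      ∃ n₀, ∀ m ≥ n₀, P m = P n₀ := by
    intro u
    induction u with
    | zero =>
      intro s hs P hPlow hPS hPdesc
      have hPanti : ∀ {n m : ℕ}, n ≤ m → P m ≤ P n := fun h => antitone_nat_of_succ_le hPdesc h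
      have hsw : (s : ℤ) = -w := by omega
      set A : ℕ → Submodule G H := fun n => P n ⊓ LinearMap.ker X with hA
      obtain ⟨n₀, hn₀⟩ := hker A (fun n => inf_le_right)
        (by
          intro n x hx hxk
          refine ⟨hPlow n (low_mono ?_ (sup_le_low r₀ x hx)), hxk⟩
          omega)
        (fun n => inf_le_inf_right _ (hPdesc n))
      refine ⟨n₀, fun m hm => le_antisymm (hPanti hm) ?_⟩
      intro x hx
      obtain ⟨f, hf, b, hb, rfl⟩ := S_split x (hPS n₀ hx)
      have hflow : f ∈ low (r + s) := by rw [hsw]; exact low_mono (by omega) hf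
      have hbA : b ∈ A n₀ := by
        refine ⟨?_, hb⟩
        have : b = f + b - f := by abel
        rw [this]
        exact Submodule.sub_mem _ hx (hPlow n₀ hflow)
      rw [← hn₀ m hm] at hbA
      exact Submodule.add_mem _ (hPlow m hflow) hbA.1
    | succ u ih =>
      intro s hs P hPlow hPS hPdesc
      have hPanti : ∀ {n m : ℕ}, n ≤ m → P m ≤ P n := fun h => antitone_nat_of_succ_le hPdesc h
      have hcast : ((s + 1 : ℕ) : ℤ) = (s : ℤ) + 1 := by push_cast; ring
      have hlow1_le_S : low (r + (s + 1 : ℕ)) ≤ S := by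
        apply low_le_S
        omega
      set P' : ℕ → Submodule G H := fun n => P n ⊔ low (r + (s + 1 : ℕ)) with hP'
      obtain ⟨n₁, hn₁⟩ := ih (s + 1) (by push_cast; push_cast at hs; omega) P'
        (fun n => le_sup_right)
        (fun n => sup_le (hPS n) hlow1_le_S)
        (fun n => sup_le_sup_right (hPdesc n) _)
      set A : ℕ → AddSubgroup H := fun n => (P n).toAddSubgroup ⊓ ℋ (r + s) with hA
      obtain ⟨n₂, hn₂⟩ := hart (r + s) (by omega) A
        (fun n => inf_le_right)
        (by
          intro n g hg x hx
          rcases hx with ⟨hx1, hx2⟩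
          have h1 : g • x ∈ P n := Submodule.smul_mem _ g hx1
          have h2 : g • x ∈ ℋ (r + s) := by
            have := hHsmul 0 (r + s) g hg x hx2
            rwa [zero_add] at this
          exact ⟨h1, h2⟩)
        (fun n => inf_le_inf_right _ (hPdesc n))
      refine ⟨max n₁ n₂, fun m hm => le_antisymm (hPanti hm) ?_⟩
      intro x hx
      -- x ∈ P (max n₁ n₂), show x ∈ P m
      have hxP' : x ∈ P' m := by
        have e1 : P' (max n₁ n₂) = P' n₁ := hn₁ _ (le_max_left _ _)
        have e2 : P' m = P' n₁ := hn₁ _ ((le_max_left _ _).trans hm)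
        have : x ∈ P' (max n₁ n₂) := le_sup_left (α := Submodule G H) hx
        rw [e1] at this; rw [e2]; exact this
      obtain ⟨p, hp, l, hl, rfl⟩ := Submodule.mem_sup.mp hxP'
      have hpN : p ∈ P (max n₁ n₂) := hPanti hm hp
      have hlN : l ∈ P (max n₁ n₂) := by
        have : l = p + l - p := by abel
        rw [this]; exact Submodule.sub_mem _ hx hpN
      set h : H := cp (r + s) l with hh
      have hhH : h ∈ ℋ (r + s) := cp_mem _ _
      have hlh : l - h ∈ low (r + s) := by
        intro d hd
        rw [cp_sub]
        by_cases hds : d = r + s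
        · rw [hh, ← hds, cp_same d (cp d l) (cp_mem d l), sub_self]
        · have h1 : cp d l = 0 := hl d (by rw [hcast]; omega)
          have h2 : cp d h = 0 := cp_ne _ hhH (by omega)
          rw [h1, h2, sub_zero]
      have hhP : h ∈ P (max n₁ n₂) := by
        have : h = l - (l - h) := by abel
        rw [this]
        exact Submodule.sub_mem _ hlN (hPlow _ hlh)
      have hhA : h ∈ A (max n₁ n₂) := ⟨hhP, hhH⟩
      have hhAm : h ∈ A m := by
        have e1 : A (max n₁ n₂) = A n₂ := hn₂ _ (le_max_right _ _)
        have e2 : A m = A n₂ := hn₂ _ ((le_max_right _ _).trans hm)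
        rw [e1] at hhA; rw [e2]; exact hhA
      have : p + l = p + (l - h) + h := by abel
      rw [this]
      exact Submodule.add_mem _ (Submodule.add_mem _ hp (hPlow m hlh)) hhAm.1
  have STAB0 : ∀ P : ℕ → Submodule G H,
      (∀ n, low r ≤ P n) → (∀ n, P n ≤ S) → (∀ n, P (n + 1) ≤ P n) →
      ∃ n₀, ∀ m ≥ n₀, P m = P n₀ := by
    intro P h1 h2 h3
    refine STAB (-w).toNat 0 (by omega) P (fun n => ?_) h2 h3
    have : ((0 : ℕ) : ℤ) = 0 := rfl
    rw [this, add_zero]; exact h1 n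
  -- main argument
  refine ⟨r, ?_⟩
  intro C hCcont hCX hCdesc
  have hCanti : ∀ {n m : ℕ}, n ≤ m → C m ≤ C n := by
    intro n m h; exact antitone_nat_of_succ_le hCdesc h
  have low_le_C : ∀ n, low r ≤ C n := by
    intro n x hx; exact hCcont n x (low_le_sup r x hx)
  set U : ℕ → ℕ → Submodule G H := fun j n => Submodule.map (X ^ j) (C n) ⊔ low r with hU
  set V : ℕ → ℕ → Submodule G H := fun j n => U j n ⊓ S with hV
  have U_X : ∀ j n, ∀ x ∈ U j n, X x ∈ U (j + 1) n := by
    intro j n x hx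
    obtain ⟨a, ha, l, hl, rfl⟩ := Submodule.mem_sup.mp hx
    obtain ⟨c, hc, rfl⟩ := ha
    rw [map_add]
    refine Submodule.add_mem _ (le_sup_left (α := Submodule G H) ?_) (le_sup_right (α := Submodule G H) (X_low_r l hl))
    exact ⟨c, hc, pow_succ_apply' j c⟩
  have U_anti_j : ∀ j n, U (j + 1) n ≤ U j n := by
    intro j n
    refine sup_le (le_trans ?_ le_sup_left) le_sup_right
    intro y hy
    obtain ⟨c, hc, rfl⟩ := hy
    exact ⟨X c, hCX n c hc, (pow_succ_apply j c).symm⟩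
  have U_anti_j' : ∀ {j j' : ℕ}, j ≤ j' → ∀ n, U j' n ≤ U j n := by
    intro j j' hjj n
    exact antitone_nat_of_succ_le (f := fun k => U k n) (fun k => U_anti_j k n) hjj
  have U_anti_n : ∀ j, ∀ {n m : ℕ}, n ≤ m → U j m ≤ U j n := by
    intro j n m hnm
    exact sup_le_sup_right (Submodule.map_mono (hCanti hnm)) _
  have low_le_U : ∀ j n, low r ≤ U j n := fun j n => le_sup_right
  have V_le_S : ∀ j n, V j n ≤ S := fun j n => inf_le_right
  have low_le_V : ∀ j n, low r ≤ V j n := fun j n => le_inf (low_le_U j n) (low_le_S (by omega))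
  have V_anti_j : ∀ {j j' : ℕ}, j ≤ j' → ∀ n, V j' n ≤ V j n :=
    fun hjj n => inf_le_inf_right _ (U_anti_j' hjj n)
  have V_anti_n : ∀ j, ∀ {n m : ℕ}, n ≤ m → V j m ≤ V j n := by
    intro j n m hnm
    exact inf_le_inf_right _ (U_anti_n j hnm)
  -- diagonal stabilization
  obtain ⟨a₀, ha₀⟩ := STAB0 (fun n => V n n) (fun n => low_le_V n n) (fun n => V_le_S n n)
    (fun n => le_trans (V_anti_j (by omega) (n + 1)) (V_anti_n n (by omega)))
  -- row stabilization
  have hrows : ∀ j, ∃ n₀, ∀ m ≥ n₀, V j m = V j n₀ := by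
    intro j
    exact STAB0 (fun n => V j n) (fun n => low_le_V j n) (fun n => V_le_S j n)
      (fun n => V_anti_n j (by omega))
  choose rowb hrowb using hrows
  set N : ℕ := max a₀ ((Finset.range a₀).sup rowb) with hN
  have huni : ∀ (j n m : ℕ), N ≤ n → n ≤ m → V j n = V j m := by
    intro j n m hNn hnm
    by_cases hj : j < a₀
    · have hb : rowb j ≤ N := le_max_of_le_right (Finset.le_sup (Finset.mem_range.mpr hj))
      rw [hrowb j n (hb.trans hNn), hrowb j m (hb.trans (hNn.trans hnm))]
    · push_neg at hj
      have ha : a₀ ≤ N := le_max_left _ _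
      have key : ∀ q, a₀ ≤ q → ∀ p, a₀ ≤ p → V j p = V a₀ a₀ → True := fun _ _ _ _ _ => trivial
      have gen : ∀ p, a₀ ≤ p → N ≤ p → V j p = V a₀ a₀ := by
        intro p _ hNp
        have hap : a₀ ≤ p := ha.trans hNp
        have h1 : V (max j p) (max j p) ≤ V j p :=
          le_trans (V_anti_j (le_max_left _ _) _) (V_anti_n j (le_max_right _ _))
        have h2 : V j p ≤ V a₀ a₀ :=
          le_trans (V_anti_j hj p) (V_anti_n a₀ hap)
        have h3 : V (max j p) (max j p) = V a₀ a₀ := ha₀ _ (le_trans hap (le_max_right _ _))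
        exact le_antisymm h2 (h3 ▸ h1)
      rw [gen n (ha.trans hNn) hNn, gen m (ha.trans (hNn.trans hnm)) (hNn.trans hnm)]
  -- determination
  have det : ∀ (n m : ℕ), N ≤ n → n ≤ m → ∀ (k : ℕ) (x : H), (X ^ k) x ∈ low r →
      ∀ j, x ∈ U j n → x ∈ U j m := by
    intro n m hNn hnm k
    induction k with
    | zero =>
      intro x hx j _
      rw [pow_zero_apply] at hx
      exact le_sup_right (α := Submodule G H) hx
    | succ k ih =>
      intro x hx j hxU
      have hXx_low : (X ^ k) (X x) ∈ low r := by rw [← pow_succ_apply]; exact hx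
      have hXxU : X x ∈ U (j + 1) m := ih (X x) hXx_low (j + 1) (U_X j n x hxU)
      obtain ⟨a, ha, l', hl', hXxeq⟩ := Submodule.mem_sup.mp hXxU
      obtain ⟨c, hc, rfl⟩ := ha
      set y : H := (X ^ j) c with hy
      have hyUm : y ∈ U j m := le_sup_left (α := Submodule G H) ⟨c, hc, rfl⟩
      have hXxy : X (x - y) = l' := by
        rw [map_sub, ← hXxeq, hy, ← pow_succ_apply']
        abel
      have hxyS : x - y ∈ S := by
        rw [mem_S, hXxy]; exact hl'
      have hxyU : x - y ∈ U j n :=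
        Submodule.sub_mem _ hxU (U_anti_n j hnm hyUm)
      have hxyV : x - y ∈ V j m := by
        rw [← huni j n m hNn hnm]; exact ⟨hxyU, hxyS⟩
      have : x = (x - y) + y := by abel
      rw [this]
      exact Submodule.add_mem _ hxyV.1 hyUm
  -- conclusion
  refine ⟨N, fun m hm => le_antisymm (hCanti hm) ?_⟩
  intro x hx
  obtain ⟨k, hk⟩ := locNilp x
  have hx0 : x ∈ U 0 N := le_sup_left (α := Submodule G H) ⟨x, hx, pow_zero_apply x⟩
  have hxm : x ∈ U 0 m := det N m le_rfl hm k x hk 0 hx0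
  obtain ⟨a, ha, l, hl, rfl⟩ := Submodule.mem_sup.mp hxm
  obtain ⟨c, hc, rfl⟩ := ha
  rw [pow_zero_apply]
  exact Submodule.add_mem _ hc (low_le_C m hl)
end
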